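/- Suppose (A,B) is a pair of vertex subsets of a graph which is not lower-(q,γ)-regular. Then there exist nonempty subsets A' ⊆ A and B' ⊆ B with |A'| = |B'| and d(A',B') ≤ q − γ·min(|A|/|A'|, |B|/|B'|). -/

import Mathlib

open Finset

/-- Number of ordered edges between `A` and `B`. -/
def epairs {V : Type*} [DecidableEq V] (G : SimpleGraph V) [DecidableRel G.Adj]
    (A B : Finset V) : ℕ :=
  ((A ×ˢ B).filter fun e => G.Adj e.1 e.2).card

/-- Edge density between `A` and `B`. -/
noncomputable def edens {V : Type*} [DecidableEq V] (G : SimpleGraph V) [DecidableRel G.Adj]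
    (A B : Finset V) : ℝ :=
  (epairs G A B : ℝ) / ((A.card : ℝ) * B.card)

def lowerReg {V : Type*} [DecidableEq V] (G : SimpleGraph V) [DecidableRel G.Adj]
    (A B : Finset V) (q ε : ℝ) : Prop :=
  ∀ A' ⊆ A, ∀ B' ⊆ B,
    (epairs G A' B' : ℝ) ≥ q * A'.card * B'.card - ε * A.card * B.card

def upperReg {V : Type*} [DecidableEq V] (G : SimpleGraph V) [DecidableRel G.Adj]
    (A B : Finset V) (q ε : ℝ) : Prop :=
  ∀ A' ⊆ A, ∀ B' ⊆ B,
    (epairs G A' B' : ℝ) ≤ q * A'.card * B'.card + ε * A.card * B.card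

lemma epairs_eq_sum {V : Type*} [DecidableEq V] (G : SimpleGraph V) [DecidableRel G.Adj]
    (A B : Finset V) : epairs G A B = ∑ a ∈ A, (B.filter (G.Adj a)).card := by
  unfold epairs
  rw [Finset.card_filter, Finset.sum_product]
  refine Finset.sum_congr rfl fun a _ => ?_
  rw [Finset.card_filter]

lemma epairs_comm {V : Type*} [DecidableEq V] (G : SimpleGraph V) [DecidableRel G.Adj]
    (A B : Finset V) : epairs G A B = epairs G B A := by
  unfold epairs
  apply Finset.card_nbij (fun e => (e.2, e.1))
  · rintro ⟨a,b⟩ he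
    simp only [mem_filter, mem_product] at he ⊢
    have he2 : (a, b) ∈ (A ×ˢ B).filter (fun e => G.Adj e.1 e.2) := he
    simp only [mem_filter, mem_product] at he2
    exact Finset.mem_filter.mpr ⟨Finset.mem_product.mpr ⟨he2.1.2, he2.1.1⟩, he2.2.symm⟩
  · rintro ⟨a,b⟩ ha ⟨c,d⟩ hc hcd
    simpa [Prod.ext_iff, and_comm] using hcd
  · rintro ⟨a,b⟩ he
    simp only [mem_coe, mem_filter, mem_product] at he ⊢
    exact ⟨(b,a), by simpa [and_comm] using ⟨⟨he.1.2, he.1.1⟩, he.2.symm⟩, rfl⟩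

lemma key {V : Type*} [DecidableEq V] (G : SimpleGraph V) [DecidableRel G.Adj]
    (B : Finset V) : ∀ (A : Finset V) (k : ℕ), k ≤ A.card →
    ∃ A' ⊆ A, A'.card = k ∧ epairs G A' B * A.card ≤ epairs G A B * k := by
  intro A
  induction A using Finset.strongInduction with
  | _ A ih =>
    intro k hk
    rcases eq_or_lt_of_le hk with heq | hlt
    · exact ⟨A, subset_rfl, heq.symm, by rw [heq]⟩
    rcases Nat.eq_zero_or_pos k with rfl | hk0
    · exact ⟨∅, empty_subset _, card_empty, by simp [epairs]⟩
    have hA : A.Nonempty := card_pos.mp (lt_of_le_of_lt (Nat.zero_le k) hlt)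
    obtain ⟨a, haA, hmax⟩ := A.exists_max_image (fun a => (B.filter (G.Adj a)).card) hA
    set d := (B.filter (G.Adj a)).card with hd
    set e := epairs G A B with he
    set n := A.card with hn
    have hsum : d + epairs G (A.erase a) B = e := by
      rw [he, epairs_eq_sum, epairs_eq_sum]
      exact Finset.add_sum_erase _ (fun x => (B.filter (G.Adj x)).card) haA
    have hdn : e ≤ d * n := by
      rw [he, epairs_eq_sum, hn]
      calc ∑ x ∈ A, (B.filter (G.Adj x)).card ≤ ∑ _x ∈ A, d :=
            Finset.sum_le_sum fun x hx => hmax x hx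
        _ = A.card * d := by rw [Finset.sum_const, smul_eq_mul]
        _ = d * A.card := Nat.mul_comm _ _
    set e₁ := epairs G (A.erase a) B with he₁
    have h2 : e₁ * n ≤ e * (n - 1) := by
      have h3 : e₁ * n + e ≤ e * n := by
        calc e₁ * n + e ≤ e₁ * n + d * n := by omega
          _ = (e₁ + d) * n := (Nat.add_mul _ _ _).symm
          _ = e * n := by rw [Nat.add_comm e₁ d, hsum]
      have : e * (n-1) = e * n - e := by
        rw [Nat.mul_sub, Nat.mul_one]
      omega
    have hcard : (A.erase a).card = n - 1 := by rw [Finset.card_erase_of_mem haA]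
    have hk' : k ≤ (A.erase a).card := by omega
    obtain ⟨A', hA'sub, hA'card, hA'le⟩ := ih (A.erase a) (Finset.erase_ssubset haA) k hk'
    refine ⟨A', hA'sub.trans (Finset.erase_subset _ _), hA'card, ?_⟩
    rw [hcard] at hA'le
    have hn1 : 0 < n - 1 := by omega
    have hchain : epairs G A' B * n * (n - 1) ≤ e * k * (n - 1) := by
      calc epairs G A' B * n * (n-1) = epairs G A' B * (n-1) * n := by ring
        _ ≤ e₁ * k * n := Nat.mul_le_mul_right _ hA'le
        _ = e₁ * n * k := by ring
        _ ≤ e * (n-1) * k := Nat.mul_le_mul_right _ h2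
        _ = e * k * (n-1) := by ring
    exact Nat.le_of_mul_le_mul_right hchain hn1

set_option maxHeartbeats 1000000 in
theorem stmt_11 {V : Type*} [DecidableEq V] (G : SimpleGraph V) [DecidableRel G.Adj]
    (A B : Finset V) (q γ : ℝ) (hγ : 0 < γ)
    (h : ¬ lowerReg G A B q γ) :
    ∃ A' ⊆ A, ∃ B' ⊆ B, A'.Nonempty ∧ B'.Nonempty ∧ A'.card = B'.card ∧
      edens G A' B' ≤ q - γ * min ((A.card : ℝ) / A'.card) ((B.card : ℝ) / B'.card) := by
  simp only [lowerReg, not_forall] at h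
  obtain ⟨A₀, hA₀, B₀, hB₀, hlt⟩ := h
  push_neg at hlt
  have hA₀ne : A₀.Nonempty := by
    rw [Finset.nonempty_iff_ne_empty]
    rintro rfl
    simp only [Finset.card_empty, Nat.cast_zero, mul_zero, zero_mul, zero_sub] at hlt
    have h1 : (0:ℝ) ≤ (epairs G ∅ B₀ : ℝ) := Nat.cast_nonneg _
    have h2 : (0:ℝ) ≤ γ * A.card * B.card := by positivity
    linarith
  have hB₀ne : B₀.Nonempty := by
    rw [Finset.nonempty_iff_ne_empty]
    rintro rfl
    simp only [Finset.card_empty, Nat.cast_zero, mul_zero, zero_sub] at hlt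
    have h1 : (0:ℝ) ≤ (epairs G A₀ ∅ : ℝ) := Nat.cast_nonneg _
    have h2 : (0:ℝ) ≤ γ * A.card * B.card := by positivity
    linarith
  have ha0 : (0:ℝ) < A₀.card := by exact_mod_cast Finset.card_pos.mpr hA₀ne
  have hb0 : (0:ℝ) < B₀.card := by exact_mod_cast Finset.card_pos.mpr hB₀ne
  have haA : (A₀.card : ℝ) ≤ A.card := by exact_mod_cast Finset.card_le_card hA₀
  have hbB : (B₀.card : ℝ) ≤ B.card := by exact_mod_cast Finset.card_le_card hB₀
  rcases le_total A₀.card B₀.card with hcase | hcase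
  · -- shrink B₀ to size |A₀|
    obtain ⟨B', hB'sub, hB'card, hB'le⟩ := key G A₀ B₀ A₀.card hcase
    have hle : (epairs G A₀ B' : ℝ) * B₀.card ≤ (epairs G A₀ B₀ : ℝ) * A₀.card := by
      rw [epairs_comm G A₀ B', epairs_comm G A₀ B₀]
      exact_mod_cast hB'le
    refine ⟨A₀, hA₀, B', hB'sub.trans hB₀, hA₀ne, ?_, hB'card.symm, ?_⟩
    · rw [← Finset.card_pos, hB'card]; exact Finset.card_pos.mpr hA₀ne
    unfold edens
    rw [hB'card]
    set k : ℝ := (A₀.card : ℝ) with hk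
    set m := min ((A.card : ℝ) / k) ((B.card : ℝ) / k) with hm
    have hkb : k ≤ (B₀.card : ℝ) := by rw [hk]; exact_mod_cast hcase
    have hm0 : 0 ≤ m := le_min (by positivity) (by positivity)
    have hmk : m * k ≤ (A.card : ℝ) := by
      have h1 : m ≤ (A.card : ℝ) / k := min_le_left _ _
      calc m * k ≤ ((A.card : ℝ) / k) * k := mul_le_mul_of_nonneg_right h1 ha0.le
        _ = A.card := by field_simp
    rw [div_le_iff₀ (by positivity)]
    have he' : (0:ℝ) ≤ (epairs G A₀ B' : ℝ) := Nat.cast_nonneg _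
    have step1 : (epairs G A₀ B' : ℝ) * B₀.card ≤
        (q * k * B₀.card - γ * A.card * B.card) * k := by
      have := mul_le_mul_of_nonneg_right hlt.le ha0.le
      calc (epairs G A₀ B' : ℝ) * B₀.card ≤ (epairs G A₀ B₀ : ℝ) * A₀.card := hle
        _ ≤ (q * k * B₀.card - γ * A.card * B.card) * k := by
            rw [hk]; nlinarith
    have step2 : m * k * (k * B₀.card) ≤ (A.card : ℝ) * (B.card * k) := by
      have h1 : m * k * (k * B₀.card) ≤ (A.card : ℝ) * (k * B₀.card) :=
        mul_le_mul_of_nonneg_right hmk (by positivity)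
      have h2 : (A.card : ℝ) * (k * B₀.card) ≤ (A.card : ℝ) * (B.card * k) := by
        apply mul_le_mul_of_nonneg_left _ (by positivity)
        nlinarith
      linarith
    have step3 := mul_le_mul_of_nonneg_left step2 hγ.le
    have hfin : (epairs G A₀ B' : ℝ) * B₀.card ≤ (q - γ * m) * (k * k) * B₀.card := by
      nlinarith
    exact le_of_mul_le_mul_right hfin hb0
  · -- shrink A₀ to size |B₀|
    obtain ⟨A', hA'sub, hA'card, hA'le⟩ := key G B₀ A₀ B₀.card hcase
    have hle : (epairs G A' B₀ : ℝ) * A₀.card ≤ (epairs G A₀ B₀ : ℝ) * B₀.card := by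
      exact_mod_cast hA'le
    refine ⟨A', hA'sub.trans hA₀, B₀, hB₀, ?_, hB₀ne, hA'card, ?_⟩
    · rw [← Finset.card_pos, hA'card]; exact Finset.card_pos.mpr hB₀ne
    unfold edens
    rw [hA'card]
    set k : ℝ := (B₀.card : ℝ) with hk
    set m := min ((A.card : ℝ) / k) ((B.card : ℝ) / k) with hm
    have hka : k ≤ (A₀.card : ℝ) := by rw [hk]; exact_mod_cast hcase
    have hm0 : 0 ≤ m := le_min (by positivity) (by positivity)
    have hmk : m * k ≤ (B.card : ℝ) := by
      have h1 : m ≤ (B.card : ℝ) / k := min_le_right _ _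
      calc m * k ≤ ((B.card : ℝ) / k) * k := mul_le_mul_of_nonneg_right h1 hb0.le
        _ = B.card := by field_simp
    rw [div_le_iff₀ (by positivity)]
    have he' : (0:ℝ) ≤ (epairs G A' B₀ : ℝ) := Nat.cast_nonneg _
    have step1 : (epairs G A' B₀ : ℝ) * A₀.card ≤
        (q * A₀.card * k - γ * A.card * B.card) * k := by
      have := mul_le_mul_of_nonneg_right hlt.le hb0.le
      calc (epairs G A' B₀ : ℝ) * A₀.card ≤ (epairs G A₀ B₀ : ℝ) * B₀.card := hle
        _ ≤ (q * A₀.card * k - γ * A.card * B.card) * k := by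
            rw [hk]; nlinarith
    have step2 : m * k * (k * A₀.card) ≤ (B.card : ℝ) * (A.card * k) := by
      have h1 : m * k * (k * A₀.card) ≤ (B.card : ℝ) * (k * A₀.card) :=
        mul_le_mul_of_nonneg_right hmk (by positivity)
      have h2 : (B.card : ℝ) * (k * A₀.card) ≤ (B.card : ℝ) * (A.card * k) := by
        refine mul_le_mul_of_nonneg_left ?_ (by positivity)
        calc k * (A₀.card : ℝ) = (A₀.card : ℝ) * k := mul_comm _ _
          _ ≤ (A.card : ℝ) * k := mul_le_mul_of_nonneg_right haA (by positivity)
      linarith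
    have step3 := mul_le_mul_of_nonneg_left step2 hγ.le
    have hfin : (epairs G A' B₀ : ℝ) * A₀.card ≤ (q - γ * m) * (k * k) * A₀.card := by
      nlinarith [step1, step3]
    exact le_of_mul_le_mul_right hfin ha0
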